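/- Let r ≥ 1 be an integer and let G = (X ⊔ Y, E) be a finite bipartite graph with |N_G(X)| ≥ r·|X| ≥ 1. Then G contains a nonempty envy-free r-star matching. -/

import Mathlib

attribute [local instance] Classical.propDecidable

variable {V : Type*}

/-- `X, Y` form a bipartition of the vertex set of the simple graph `G`:
they are disjoint, cover all vertices, and every edge joins `X` to `Y`. -/
def IsBipartition [Fintype V] (G : SimpleGraph V) (X Y : Finset V) : Prop :=
  Disjoint X Y ∧ X ∪ Y = Finset.univ ∧
    ∀ ⦃u v : V⦄, G.Adj u v → (u ∈ X ∧ v ∈ Y) ∨ (u ∈ Y ∧ v ∈ X)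

/-- `M` is a matching of `G` all of whose edges go from `X'` to `Y'`
(i.e. a matching of the induced subgraph `G[X', Y']`), recorded as a set of
pairwise vertex-disjoint adjacent pairs. -/
def IsBipMatching (G : SimpleGraph V) (X' Y' : Finset V) (M : Finset (V × V)) : Prop :=
  (∀ p ∈ M, p.1 ∈ X' ∧ p.2 ∈ Y' ∧ G.Adj p.1 p.2) ∧
  ∀ p ∈ M, ∀ q ∈ M, p ≠ q → p.1 ≠ q.1 ∧ p.2 ≠ q.2

/-- `M` is envy-free w.r.t. `X`: no unmatched vertex of `X` is adjacent to a
matched vertex on the `Y`-side of `M`. -/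
def EnvyFree (G : SimpleGraph V) (X : Finset V) (M : Finset (V × V)) : Prop :=
  ∀ x ∈ X, x ∉ M.image Prod.fst → ∀ y ∈ M.image Prod.snd, ¬ G.Adj x y

/-- The (bipartite) graph `G[X ∪ Y]` is `Y`-path-saturated: for some `k ≥ 1` there are
partitions `X = X_0 ⊔ ⋯ ⊔ X_k` and `Y = Y_1 ⊔ ⋯ ⊔ Y_k` such that for `1 ≤ i ≤ k`
there is a perfect matching between `X_i` and `Y_i`, and every vertex of `Y_i` is
adjacent to some vertex of `X_{i-1}`. -/
def YPathSaturated (G : SimpleGraph V) (X Y : Finset V) : Prop :=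
  ∃ k : ℕ, 1 ≤ k ∧ ∃ A B : ℕ → Finset V,
    (∀ i ∈ Finset.range (k + 1), ∀ j ∈ Finset.range (k + 1), i ≠ j → Disjoint (A i) (A j)) ∧
    (∀ i ∈ Finset.Icc 1 k, ∀ j ∈ Finset.Icc 1 k, i ≠ j → Disjoint (B i) (B j)) ∧
    X = (Finset.range (k + 1)).biUnion A ∧
    Y = (Finset.Icc 1 k).biUnion B ∧
    (∀ i ∈ Finset.Icc 1 k, ∃ f : V → V,
      Set.BijOn f (A i) (B i) ∧ ∀ x ∈ A i, G.Adj x (f x)) ∧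
    (∀ i ∈ Finset.Icc 1 k, ∀ y ∈ B i, ∃ x ∈ A (i - 1), G.Adj x y)

/-- `M` is an `r`-star matching of `G` with centers in `X` and leaves in `Y`:
a set of pairwise vertex-disjoint stars `K_{1,r}`, each recorded as a pair
(center, set of `r` leaves). -/
def IsStarMatching (G : SimpleGraph V) (X Y : Finset V) (r : ℕ)
    (M : Finset (V × Finset V)) : Prop :=
  (∀ p ∈ M, p.1 ∈ X ∧ p.2 ⊆ Y ∧ p.2.card = r ∧ ∀ y ∈ p.2, G.Adj p.1 y) ∧
  ∀ p ∈ M, ∀ q ∈ M, p ≠ q → p.1 ≠ q.1 ∧ p.1 ∉ q.2 ∧ Disjoint p.2 q.2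

/-- The `r`-star matching `M` is envy-free w.r.t. `X`: every vertex of `X` not matched
as a center is non-adjacent to every vertex matched as a leaf. -/
def StarEnvyFree (G : SimpleGraph V) (X : Finset V) (M : Finset (V × Finset V)) : Prop :=
  ∀ x ∈ X, x ∉ M.image Prod.fst → ∀ p ∈ M, ∀ y ∈ p.2, ¬ G.Adj x y

/- Choose `D ⊊ X` maximising the deficiency `r|S| - |N(S)|` over `S ⊆ X`; this is possible since
`∅` has deficiency `0 ≥` that of `X`. Maximality says that every `S ⊆ X \ D` has at least `r|S|`
neighbours outside `N(D)`, so by Hall's theorem (applied to `r` copies of each vertex) every vertex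
of `X \ D` is the center of a star whose `r` leaves avoid `N(D)`. The unmatched vertices are those
of `D`, which see no leaf. -/

open Finset SimpleGraph

theorem Finset.exists_injective_of_forall_mul_card_le_card_biUnion {ι α : Type*}
    [DecidableEq α] (t : ι → Finset α) (r : ℕ) (h : ∀ s : Finset ι, r * #s ≤ #(s.biUnion t)) :
    ∃ f : ι × Fin r → α, Function.Injective f ∧ ∀ i k, f (i, k) ∈ t i := by
  have hall : ∀ s : Finset (ι × Fin r), #s ≤ #(s.biUnion fun p => t p.1) := fun s =>
    calc #s ≤ #(s.image Prod.fst ×ˢ (univ : Finset (Fin r))) :=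
          card_le_card fun p hp => mem_product.2 ⟨mem_image_of_mem _ hp, mem_univ _⟩
      _ = r * #(s.image Prod.fst) := by rw [card_product, card_univ, Fintype.card_fin, mul_comm]
      _ ≤ #((s.image Prod.fst).biUnion t) := h _
      _ = #(s.biUnion fun p => t p.1) := by rw [image_biUnion]
  obtain ⟨f, hf, hft⟩ := (all_card_le_biUnion_card_iff_exists_injective _).1 hall
  exact ⟨f, hf, fun i k => hft (i, k)⟩

theorem IsBipartition.mem_right_of_adj [Fintype V] {G : SimpleGraph V} {X Y : Finset V}
    (hG : IsBipartition G X Y) {x y : V} (hx : x ∈ X)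
    (hxy : G.Adj x y) : y ∈ Y :=
  ((hG.2.2 hxy).resolve_right fun h => (disjoint_left.1 hG.1 hx h.1).elim).2

section Stars

variable {G : SimpleGraph V} {X Y : Finset V} {r : ℕ} {C : Finset V} {f : ↥C × Fin r → V}

noncomputable def stars (C : Finset V) (f : ↥C × Fin r → V) : Finset (V × Finset V) :=
  C.attach.image fun c : ↥C => ((c : V), univ.image fun k => f (c, k))

theorem mem_stars {p : V × Finset V} :
    p ∈ stars C f ↔ ∃ c : ↥C, p = ((c : V), univ.image fun k => f (c, k)) := by
  simp [stars, eq_comm]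

theorem image_fst_stars : (stars C f).image Prod.fst = C := by
  ext x
  simp [stars]

theorem isStarMatching_stars [Fintype V] (hG : IsBipartition G X Y) (hCX : C ⊆ X)
    (hf : Function.Injective f) (hadj : ∀ (c : ↥C) k, G.Adj c (f (c, k))) :
    IsStarMatching G X Y r (stars C f) := by
  have hleaf {c : ↥C} {y : V} (hy : y ∈ univ.image fun k => f (c, k)) :
      ∃ k, f (c, k) = y := by simpa using hy
  refine ⟨fun p hp => ?_, fun p hp q hq hpq => ?_⟩
  · obtain ⟨c, rfl⟩ := mem_stars.1 hp
    have hcX := hCX c.2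
    refine ⟨hcX, fun y hy => ?_, ?_, fun y hy => ?_⟩
    · obtain ⟨k, rfl⟩ := hleaf hy
      exact hG.mem_right_of_adj hcX (hadj c k)
    · rw [card_image_of_injective _ fun k l h => (Prod.ext_iff.1 (hf h)).2, card_univ,
        Fintype.card_fin]
    · obtain ⟨k, rfl⟩ := hleaf hy
      exact hadj c k
  · obtain ⟨c, rfl⟩ := mem_stars.1 hp
    obtain ⟨d, rfl⟩ := mem_stars.1 hq
    have hcd : c ≠ d := by rintro rfl; exact hpq rfl
    refine ⟨Subtype.coe_injective.ne hcd, fun hc => ?_, disjoint_left.2 fun y hy hy' => ?_⟩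
    · obtain ⟨k, hk⟩ := hleaf (y := c) hc
      exact disjoint_left.1 hG.1 (hCX c.2) (hk ▸ hG.mem_right_of_adj (hCX d.2) (hadj d k))
    · obtain ⟨k, rfl⟩ := hleaf hy
      obtain ⟨l, hl⟩ := hleaf hy'
      exact hcd (Prod.ext_iff.1 (hf hl)).1.symm

theorem starEnvyFree_stars (h : ∀ x ∈ X, x ∉ C → ∀ c k, ¬G.Adj x (f (c, k))) :
    StarEnvyFree G X (stars C f) := by
  intro x hx hxC p hp y hy hxy
  rw [image_fst_stars] at hxC
  obtain ⟨c, rfl⟩ := mem_stars.1 hp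
  obtain ⟨k, rfl⟩ : ∃ k, f (c, k) = y := by simpa using hy
  exact h x hx hxC c k hxy

end Stars

namespace SimpleGraph

variable [Fintype V] {G : SimpleGraph V} {X : Finset V}

variable (G) in
noncomputable def nbhd (S : Finset V) : Finset V :=
  univ.filter fun y => ∃ x ∈ S, G.Adj x y

@[simp]
theorem mem_nbhd {S : Finset V} {y : V} : y ∈ G.nbhd S ↔ ∃ x ∈ S, G.Adj x y := by
  simp [nbhd]

theorem nbhd_union (S T : Finset V) : G.nbhd (S ∪ T) = G.nbhd S ∪ G.nbhd T := by
  ext y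
  simp only [mem_nbhd, mem_union, or_and_right, exists_or]

@[simp]
theorem nbhd_empty : G.nbhd ∅ = ∅ := by
  ext y
  simp

variable (G) in
noncomputable def starDeficiency (r : ℕ) (S : Finset V) : ℤ :=
  r * #S - #(G.nbhd S)

theorem exists_starDeficiency_max {r : ℕ} (hX : X.Nonempty) (hN : r * #X ≤ #(G.nbhd X)) :
    ∃ D ⊆ X, D ≠ X ∧ ∀ S ⊆ X, G.starDeficiency r S ≤ G.starDeficiency r D := by
  have hempty : ∅ ∈ X.powerset.erase X := mem_erase.2 ⟨hX.ne_empty.symm, empty_mem_powerset X⟩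
  obtain ⟨D, hD, hmax⟩ := exists_max_image _ (G.starDeficiency r) ⟨∅, hempty⟩
  refine ⟨D, mem_powerset.1 (mem_of_mem_erase hD), ne_of_mem_erase hD, fun S hS => ?_⟩
  by_cases hSX : S = X
  · subst hSX
    calc G.starDeficiency r S ≤ 0 := by
          rw [starDeficiency, sub_nonpos]; exact_mod_cast hN
      _ = G.starDeficiency r ∅ := by simp [starDeficiency]
      _ ≤ G.starDeficiency r D := hmax ∅ hempty
  · exact hmax S (mem_erase.2 ⟨hSX, mem_powerset.2 hS⟩)

/-- Maximality of `D` is Hall's condition, with multiplicity `r`, for `X \ D` in `G - N(D)`. -/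
theorem mul_card_le_card_nbhd_sdiff {r : ℕ} {D S : Finset V} (hDX : D ⊆ X)
    (hD : ∀ S ⊆ X, G.starDeficiency r S ≤ G.starDeficiency r D) (hS : S ⊆ X \ D) :
    r * #S ≤ #(G.nbhd S \ G.nbhd D) := by
  have hle := hD (D ∪ S) (union_subset hDX (hS.trans sdiff_subset))
  have hcard : #(G.nbhd S \ G.nbhd D) + #(G.nbhd D) = #(G.nbhd (D ∪ S)) := by
    rw [nbhd_union, union_comm]
    exact card_sdiff_add_card _ _
  rw [starDeficiency, starDeficiency,
    card_union_of_disjoint (disjoint_of_subset_right hS disjoint_sdiff)] at hle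
  zify at hcard ⊢
  push_cast at hle
  linarith

theorem exists_leaves_outside_nbhd {r : ℕ} {D : Finset V} (hDX : D ⊆ X)
    (hD : ∀ S ⊆ X, G.starDeficiency r S ≤ G.starDeficiency r D) :
    ∃ f : ↥(X \ D) × Fin r → V, Function.Injective f ∧
      ∀ (c : ↥(X \ D)) k, G.Adj c (f (c, k)) ∧ f (c, k) ∉ G.nbhd D := by
  let t (c : ↥(X \ D)) : Finset V := univ.filter (G.Adj c) \ G.nbhd D
  have hall (s : Finset ↥(X \ D)) : r * #s ≤ #(s.biUnion t) := by
    have hsub : G.nbhd (s.map (.subtype _)) \ G.nbhd D ⊆ s.biUnion t := by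
      intro y hy
      obtain ⟨hy, hyD⟩ := mem_sdiff.1 hy
      obtain ⟨x, hx, hxy⟩ := mem_nbhd.1 hy
      obtain ⟨c, hc, rfl⟩ := mem_map.1 hx
      exact mem_biUnion.2 ⟨c, hc, mem_sdiff.2 ⟨by simpa using hxy, hyD⟩⟩
    calc r * #s = r * #(s.map (.subtype _)) := by rw [card_map]
      _ ≤ #(G.nbhd (s.map (.subtype _)) \ G.nbhd D) :=
        mul_card_le_card_nbhd_sdiff hDX hD fun x hx => by
          obtain ⟨c, -, rfl⟩ := mem_map.1 hx
          exact c.2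
      _ ≤ #(s.biUnion t) := card_le_card hsub
  obtain ⟨f, hf, hft⟩ := exists_injective_of_forall_mul_card_le_card_biUnion t r hall
  refine ⟨f, hf, fun c k => ?_⟩
  obtain ⟨hadj, hD⟩ := mem_sdiff.1 (hft c k)
  exact ⟨(mem_filter.1 hadj).2, hD⟩

end SimpleGraph

theorem nonempty_envy_free_star_matching [Fintype V]
    (G : SimpleGraph V) (X Y : Finset V) (hBip : IsBipartition G X Y)
    (r : ℕ)
    (h1 : 1 ≤ r * X.card)
    (hN : r * X.card ≤ (Finset.univ.filter fun y => ∃ x ∈ X, G.Adj x y).card) :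
    ∃ M : Finset (V × Finset V), IsStarMatching G X Y r M ∧ M.Nonempty ∧
      StarEnvyFree G X M := by
  have hX : X.Nonempty := card_pos.1 (Nat.pos_of_mul_pos_left h1)
  obtain ⟨D, hDX, hDne, hD⟩ := exists_starDeficiency_max (G := G) hX hN
  obtain ⟨f, hf, hfD⟩ := exists_leaves_outside_nbhd hDX hD
  refine ⟨stars (X \ D) f,
    isStarMatching_stars hBip sdiff_subset hf fun c k => (hfD c k).1, ?_,
    starEnvyFree_stars fun x hx hxD c k hxy =>
      (hfD c k).2 (mem_nbhd.2 ⟨x, by simpa [hx] using hxD, hxy⟩)⟩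
  rw [← image_nonempty (f := Prod.fst), image_fst_stars]
  exact sdiff_nonempty.2 fun hXD => hDne (hDX.antisymm hXD)
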